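/- arXiv:2407.08018 — 2 statements merged into one kernel-verified Lean document; each statement's English description precedes it below -/
import Mathlib

section
/- Let $\gamma_1 > 0$, $\gamma_2 < 0$, $\gamma_3 \geq 0$ with $-1/3 \leq \gamma_2/\gamma_1$, and let $u > 0$ satisfy $\gamma_1 \log(u) + \gamma_2 u + \gamma_3 \geq 0$. Then $u \leq (\gamma_1/\gamma_2)\, W_{-1}\big((\gamma_2/\gamma_1) e^{-\gamma_3/\gamma_1}\big)$. -/
/-!
Put `t = (γ1/γ2) w > 0`. Taking logarithms in `w e^w = (γ2/γ1) e^{-γ3/γ1}` shows that `t` is a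
root of `ψ(s) = γ1 log s + γ2 s + γ3`, and `w ≤ -1` says `ψ'(t) = γ1/t + γ2 ≤ 0`. Since `log` lies
strictly below its tangent lines, `ψ(u) < ψ(t) + ψ'(t)(u - t) ≤ 0` for every `u > t`.
-/

open Real

theorem log_lt_log_add_sub_div {t u : ℝ} (ht : 0 < t) (hu : 0 < u) (hne : u ≠ t) :
    log u < log t + (u - t) / t := by
  have hlt : log (u / t) < u / t - 1 :=
    log_lt_sub_one_of_pos (div_pos hu ht) (by rwa [ne_eq, div_eq_one_iff_eq ht.ne'])
  rw [log_div hu.ne' ht.ne'] at hlt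
  rw [sub_div, div_self ht.ne']
  linarith

theorem le_of_log_add_linear_nonneg {a b c t u : ℝ} (ha : 0 < a) (ht : 0 < t)
    (hroot : a * log t + b * t + c = 0) (hslope : a + b * t ≤ 0) (hu : 0 < u)
    (hψ : 0 ≤ a * log u + b * u + c) : u ≤ t := by
  by_contra! htu
  have htangent : a * log u < a * log t + a * (u - t) / t := by
    rw [mul_div_assoc, ← mul_add]
    exact mul_lt_mul_of_pos_left (log_lt_log_add_sub_div ht hu htu.ne') ha
  have hdescent : a * (u - t) / t + b * (u - t) ≤ 0 := by
    rw [show a * (u - t) / t + b * (u - t) = (a + b * t) * (u - t) / t by field_simp]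
    exact div_nonpos_of_nonpos_of_nonneg
      (mul_nonpos_of_nonpos_of_nonneg hslope (sub_nonneg.mpr htu.le)) ht.le
  linarith

theorem log_div_add_eq_of_mul_exp_eq {a c w : ℝ} (hpos : 0 < w / a)
    (h : w * exp w = a * exp c) : log (w / a) + w = c := by
  have ha : a ≠ 0 := by rintro rfl; simp at hpos
  have hexp : w / a * exp w = exp c := by
    rw [div_mul_eq_mul_div, h, mul_div_cancel_left₀ _ ha]
  have := congrArg log hexp
  rwa [log_mul hpos.ne' (exp_ne_zero w), log_exp, log_exp] at this

theorem log_linear_upper_bound_general (γ1 γ2 γ3 u w : ℝ) (h1 : 0 < γ1) (h2 : γ2 < 0)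
    (hu : 0 < u)
    (hpsi : 0 ≤ γ1 * Real.log u + γ2 * u + γ3)
    (hwdef : w * Real.exp w = γ2 / γ1 * Real.exp (-γ3 / γ1)) (hwm1 : w ≤ -1) :
    u ≤ γ1 / γ2 * w := by
  have ht : γ1 / γ2 * w = w / (γ2 / γ1) := by
    rw [div_div_eq_mul_div, mul_comm, mul_div_assoc]
  have ht0 : 0 < γ1 / γ2 * w :=
    mul_pos_of_neg_of_neg (div_neg_of_pos_of_neg h1 h2) (by linarith)
  have hlog := log_div_add_eq_of_mul_exp_eq (ht ▸ ht0) hwdef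
  rw [← ht] at hlog
  have hγ2t : γ2 * (γ1 / γ2 * w) = γ1 * w := by field_simp [h2.ne]
  refine le_of_log_add_linear_nonneg h1 ht0 ?_ ?_ hu hpsi
  · rw [hγ2t, ← mul_add, hlog, mul_div_cancel₀ _ h1.ne', neg_add_cancel]
  · rw [hγ2t]
    nlinarith

theorem log_linear_upper_bound (γ1 γ2 γ3 u w : ℝ) (h1 : 0 < γ1) (h2 : γ2 < 0) (h3 : 0 ≤ γ3)
    (hr : -1 / 3 ≤ γ2 / γ1) (hu : 0 < u)
    (hpsi : 0 ≤ γ1 * Real.log u + γ2 * u + γ3)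
    (hwdef : w * Real.exp w = γ2 / γ1 * Real.exp (-γ3 / γ1)) (hwm1 : w ≤ -1) :
    u ≤ γ1 / γ2 * w :=
  log_linear_upper_bound_general γ1 γ2 γ3 u w h1 h2 hu hpsi hwdef hwm1
end

section
/- For every real $x > 0$, the lower branch of the Lambert W function satisfies $|W_{-1}(-e^{-x-1})| \leq 1 + \sqrt{2x} + x$. -/
theorem lambertWm1_abs_bound (x w : ℝ) (hx : 0 < x) (hwm1 : w ≤ -1)
    (hw : w * Real.exp w = -Real.exp (-x - 1)) :
    |w| ≤ 1 + Real.sqrt (2 * x) + x := by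
  have hw0 : w < 0 := by linarith
  rw [abs_of_neg hw0]
  set s : ℝ := -w - x - 1 with hs
  have hsqrt : 0 ≤ Real.sqrt (2 * x) := Real.sqrt_nonneg _
  rcases le_or_gt s (Real.sqrt (2 * x)) with h | h
  · linarith
  · exfalso
    have hs0 : 0 ≤ s := le_of_lt (lt_of_le_of_lt hsqrt h)
    have hexp1 : Real.exp w * Real.exp (-w) = 1 := by
      rw [← Real.exp_add]; simp
    have key : -w = Real.exp s := by
      have h1 : -w * Real.exp w = Real.exp (-x - 1) := by linarith
      have h2 : -w = Real.exp (-x - 1) * Real.exp (-w) := by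
        nlinarith [Real.exp_pos (-w)]
      rw [h2, ← Real.exp_add]
      congr 1
      rw [hs]; ring
    have hsum : 1 + s + s ^ 2 / 2 ≤ Real.exp s := by
      have := Real.sum_le_exp_of_nonneg hs0 3
      simp [Finset.sum_range_succ] at this
      nlinarith [this]
    have hsq : 2 * x < s ^ 2 := by
      have h2x : Real.sqrt (2 * x) ^ 2 = 2 * x := Real.sq_sqrt (by linarith)
      nlinarith
    nlinarith
end
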